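/- Pointwise version of the coincidence of projections: Let V be a finite-dimensional real vector space with nondegenerate bilinear form ω, and F, M ⊆ V subspaces with ⊥F ⊆ F, ⊥F ∩ M = {0}, V = ⊥F ⊕ M, and V = (M ∩ F) ⊕ ⊥(M ∩ F). Let 𝒫 : V → M be the projection along ⊥F and P : V → M ∩ F the projection along ⊥(M ∩ F). Then for every v ∈ F, 𝒫(v) = P(v). -/

import Mathlib

open Module

variable {V : Type*} [AddCommGroup V] [Module ℝ V]

/-- The right complement `D^⊥ = {v : ω(w,v) = 0 for all w ∈ D}`. -/
def rcompl (ω : V →ₗ[ℝ] V →ₗ[ℝ] ℝ) (D : Submodule ℝ V) : Submodule ℝ V where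
  carrier := {v | ∀ w ∈ D, ω w v = 0}
  add_mem' := by
    intro a b ha hb w hw
    simp [map_add, ha w hw, hb w hw]
  zero_mem' := by
    intro w hw
    simp
  smul_mem' := by
    intro c a ha w hw
    simp [ha w hw]

/-- The left complement `⊥D = {v : ω(v,w) = 0 for all w ∈ D}`. -/
def lcompl (ω : V →ₗ[ℝ] V →ₗ[ℝ] ℝ) (D : Submodule ℝ V) : Submodule ℝ V :=
  rcompl ω.flip D

/-! For `v ∈ F`, the component `v - 𝒫 v` lies in `⊥F ⊆ F`, so `𝒫 v ∈ M ∩ F`; and since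
`⊥F ⊆ ⊥(M ∩ F)`, both `𝒫 v` and `P v` are `M ∩ F`-components of `v` in the decomposition
`V = (M ∩ F) ⊕ ⊥(M ∩ F)`, which are unique. -/

theorem lcompl_anti (ω : V →ₗ[ℝ] V →ₗ[ℝ] ℝ) {D E : Submodule ℝ V} (h : D ≤ E) :
    lcompl ω E ≤ lcompl ω D :=
  fun _ hx w hw => hx w (h hw)

theorem Submodule.eq_of_sub_mem_of_disjoint {R M : Type*} [Ring R] [AddCommGroup M] [Module R M]
    {A B : Submodule R M} (hAB : Disjoint A B) {x a b : M} (ha : a ∈ A) (hb : b ∈ A)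
    (hxa : x - a ∈ B) (hxb : x - b ∈ B) : a = b := by
  have hab : a - b ∈ B := by simpa only [sub_sub_sub_cancel_left] using B.sub_mem hxb hxa
  exact sub_eq_zero.mp (Submodule.disjoint_def.mp hAB _ (A.sub_mem ha hb) hab)

theorem projections_coincide_on_F_general
    (ω : V →ₗ[ℝ] V →ₗ[ℝ] ℝ)
    (F M : Submodule ℝ V)
    (h1 : lcompl ω F ≤ F)
    (h3 : IsCompl (M ⊓ F) (lcompl ω (M ⊓ F)))
    (P₁ : V →ₗ[ℝ] V) (hP₁M : ∀ v, P₁ v ∈ M) (hP₁Q : ∀ v, v - P₁ v ∈ lcompl ω F)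
    (P₂ : V →ₗ[ℝ] V) (hP₂M : ∀ v, P₂ v ∈ M ⊓ F)
    (hP₂Q : ∀ v, v - P₂ v ∈ lcompl ω (M ⊓ F)) :
    ∀ v ∈ F, P₁ v = P₂ v := by
  intro v hv
  have hP₁F : P₁ v ∈ F := by simpa using F.sub_mem hv (h1 (hP₁Q v))
  exact Submodule.eq_of_sub_mem_of_disjoint h3.disjoint ⟨hP₁M v, hP₁F⟩ (hP₂M v)
    (lcompl_anti ω inf_le_right (hP₁Q v)) (hP₂Q v)

/-- If `⊥F ⊆ F`, `V = ⊥F ⊕ M` and `V = (M ∩ F) ⊕ ⊥(M ∩ F)`, then the projection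
`𝒫` onto `M` along `⊥F` and the projection `P` onto `M ∩ F` along `⊥(M ∩ F)`
coincide on `F`. -/
theorem projections_coincide_on_F [FiniteDimensional ℝ V]
    (ω : V →ₗ[ℝ] V →ₗ[ℝ] ℝ) (hω : Function.Injective ω)
    (F M : Submodule ℝ V)
    (h1 : lcompl ω F ≤ F)
    (h2 : IsCompl (lcompl ω F) M)
    (h3 : IsCompl (M ⊓ F) (lcompl ω (M ⊓ F)))
    (P₁ : V →ₗ[ℝ] V) (hP₁M : ∀ v, P₁ v ∈ M) (hP₁Q : ∀ v, v - P₁ v ∈ lcompl ω F)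
    (P₂ : V →ₗ[ℝ] V) (hP₂M : ∀ v, P₂ v ∈ M ⊓ F)
    (hP₂Q : ∀ v, v - P₂ v ∈ lcompl ω (M ⊓ F)) :
    ∀ v ∈ F, P₁ v = P₂ v :=
  projections_coincide_on_F_general ω F M h1 h3 P₁ hP₁M hP₁Q P₂ hP₂M hP₂Q
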